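/- arXiv:2512.06488 — 3 statements merged into one kernel-verified Lean document; each statement's English description precedes it below -/
import Mathlib

section
/- Let L be an n×n complex matrix with ‖L‖h ≤ 1 for h = T/m, m·e²/(k+1)! ≤ 1, V_k = ∑_{i=0}^{k}(Lh)^i/i!, and C = sup_{t∈[0,T]} ‖exp(Lt)‖. Then for any vector y₀ and any 1 ≤ j ≤ m, ‖V_k^j y₀ − exp(Lhj) y₀‖ ≤ ((e−1)e²j/(k+1)!)·C·‖y₀‖. -/
open Matrix
open scoped Matrix.Norms.L2Operator

/-!
Write `V` for the degree-`k` Taylor polynomial of `exp` at `A = hL` and `E = exp A`. Since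
`‖A‖ ≤ 1`, the Taylor remainder gives `‖V - E‖ ≤ δ := e / (k+1)!`. As `V` and `E` commute,
expanding `V ^ j = (E + (V - E)) ^ j` binomially and bounding every power `E ^ p = exp (p h L)`
by `C` yields `‖V ^ j - E ^ j‖ ≤ ((1 + δ) ^ j - 1) C`. Finally `(1 + δ) ^ j ≤ exp (j δ)` and
convexity of `exp` on `[0, 1]` (where `j δ ≤ m δ ≤ 1`) give `(1 + δ) ^ j - 1 ≤ (e - 1) j δ`.
-/

open Finset Nat NormedSpace

theorem Nat.factorial_mul_factorial_le_factorial_add (i j : ℕ) : i ! * j ! ≤ (i + j)! :=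
  Nat.le_of_dvd (factorial_pos _) (factorial_mul_factorial_dvd_factorial_add i j)

theorem Real.exp_le_one_add_mul_of_mem_Icc {x : ℝ} (h0 : 0 ≤ x) (h1 : x ≤ 1) :
    Real.exp x ≤ 1 + (Real.exp 1 - 1) * x := by
  have := convexOn_exp.2 (Set.mem_univ 0) (Set.mem_univ 1) (sub_nonneg.2 h1) h0 (by ring)
  simp only [smul_eq_mul, mul_zero, mul_one, zero_add, Real.exp_zero] at this
  linarith

theorem one_add_pow_sub_one_le {δ : ℝ} (hδ : 0 ≤ δ) {j : ℕ} (hj : j * δ ≤ 1) :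
    (1 + δ) ^ j - 1 ≤ (Real.exp 1 - 1) * (j * δ) := by
  have : (1 + δ) ^ j ≤ Real.exp (j * δ) := by
    rw [Real.exp_nat_mul]
    gcongr
    linarith [Real.add_one_le_exp δ]
  linarith [Real.exp_le_one_add_mul_of_mem_Icc (by positivity) hj]

theorem Commute.norm_pow_sub_pow_le {R : Type*} [NormedRing R] {a b : R} (hab : Commute a b)
    {δ C : ℝ} (hδ : ‖a - b‖ ≤ δ) (j : ℕ) (hC : ∀ p < j, ‖b ^ p‖ ≤ C) :
    ‖a ^ j - b ^ j‖ ≤ ((1 + δ) ^ j - 1) * C := by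
  have hδ0 : 0 ≤ δ := (norm_nonneg _).trans hδ
  have hexpand : a ^ j - b ^ j =
      ∑ q ∈ range j, (a - b) ^ (q + 1) * b ^ (j - (q + 1)) * (j.choose (q + 1) : R) := by
    have := (hab.sub_left (Commute.refl b)).add_pow j
    rw [sub_add_cancel, sum_range_succ'] at this
    simp [this]
  have hbinom : (1 + δ) ^ j - 1 = ∑ q ∈ range j, (j.choose (q + 1) : ℝ) * δ ^ (q + 1) := by
    rw [add_comm, _root_.add_pow, sum_range_succ']
    simp [mul_comm]
  rw [hexpand, hbinom, sum_mul]
  refine (norm_sum_le _ _).trans (sum_le_sum fun q hq => ?_)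
  have hq : j - (q + 1) < j := by simp only [mem_range] at hq; omega
  calc ‖(a - b) ^ (q + 1) * b ^ (j - (q + 1)) * (j.choose (q + 1) : R)‖
      = ‖j.choose (q + 1) • ((a - b) ^ (q + 1) * b ^ (j - (q + 1)))‖ := by rw [nsmul_eq_mul']
    _ ≤ j.choose (q + 1) * (‖(a - b) ^ (q + 1)‖ * ‖b ^ (j - (q + 1))‖) :=
        norm_nsmul_le.trans (by gcongr; exact norm_mul_le _ _)
    _ ≤ j.choose (q + 1) * (δ ^ (q + 1) * C) := by
        gcongr
        · exact (norm_pow_le' _ q.succ_pos).trans (by gcongr)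
        · exact hC _ hq
    _ = j.choose (q + 1) * δ ^ (q + 1) * C := by ring

section TaylorPolynomial

variable {𝕂 𝔸 : Type*} [RCLike 𝕂] [NormedRing 𝔸] [NormedAlgebra 𝕂 𝔸] [CompleteSpace 𝔸]

theorem norm_exp_sub_sum_range_le (x : 𝔸) (n : ℕ) :
    ‖exp x - ∑ i ∈ range (n + 1), ((i ! : 𝕂)⁻¹) • x ^ i‖ ≤
      ‖x‖ ^ (n + 1) / (n + 1)! * Real.exp ‖x‖ := by
  have htail := (hasSum_nat_add_iff' (n + 1)).2 (exp_series_hasSum_exp' (𝕂 := 𝕂) x)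
  have hmajor := (Real.exp_eq_exp_ℝ ▸ expSeries_div_hasSum_exp ‖x‖).mul_left
    (‖x‖ ^ (n + 1) / (n + 1)!)
  refine htail.norm_le_of_bounded hmajor fun i => ?_
  -- the remainder terms have index `≥ 1`, so `‖x ^ i‖ ≤ ‖x‖ ^ i` holds without `‖1‖ ≤ 1`
  calc ‖((i + (n + 1))! : 𝕂)⁻¹ • x ^ (i + (n + 1))‖
      ≤ ‖x‖ ^ (i + (n + 1)) / (i + (n + 1))! := by
        rw [norm_smul, norm_inv, RCLike.norm_natCast, inv_mul_eq_div]
        gcongr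
        exact norm_pow_le' x (by omega)
    _ ≤ ‖x‖ ^ (i + (n + 1)) / (i ! * (n + 1)!) := by
        gcongr
        exact_mod_cast Nat.factorial_mul_factorial_le_factorial_add i (n + 1)
    _ = ‖x‖ ^ (n + 1) / (n + 1)! * (‖x‖ ^ i / i !) := by
        rw [pow_add, mul_div_mul_comm]
        ring

theorem norm_sum_range_sub_exp_le_of_norm_le_one {x : 𝔸} (hx : ‖x‖ ≤ 1) (k : ℕ) :
    ‖∑ i ∈ range (k + 1), ((i ! : 𝕂)⁻¹) • x ^ i - exp x‖ ≤ Real.exp 1 / (k + 1)! := by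
  rw [norm_sub_rev]
  calc _ ≤ ‖x‖ ^ (k + 1) / (k + 1)! * Real.exp ‖x‖ := norm_exp_sub_sum_range_le x k
    _ ≤ 1 / (k + 1)! * Real.exp 1 := by gcongr; exact pow_le_one₀ (norm_nonneg _) hx
    _ = Real.exp 1 / (k + 1)! := by ring

theorem norm_sum_range_pow_sub_exp_pow_le {x : 𝔸} (hx : ‖x‖ ≤ 1) {k j : ℕ}
    (hj : j * (Real.exp 1 / (k + 1)!) ≤ 1) {C : ℝ} (hC : ∀ p ≤ j, ‖exp x ^ p‖ ≤ C) :
    ‖(∑ i ∈ range (k + 1), ((i ! : 𝕂)⁻¹) • x ^ i) ^ j - exp x ^ j‖ ≤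
      (Real.exp 1 - 1) * (j * (Real.exp 1 / (k + 1)!)) * C := by
  have hC0 : 0 ≤ C := (norm_nonneg _).trans (hC 0 j.zero_le)
  have hcomm : Commute (∑ i ∈ range (k + 1), ((i ! : 𝕂)⁻¹) • x ^ i) (exp x) :=
    (Commute.sum_left _ _ _ fun i _ => ((Commute.refl x).pow_left i).smul_left _).exp_right
  calc _ ≤ ((1 + Real.exp 1 / (k + 1)!) ^ j - 1) * C :=
        hcomm.norm_pow_sub_pow_le (norm_sum_range_sub_exp_le_of_norm_le_one hx k) j
          fun p hp => hC p hp.le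
    _ ≤ _ := by
        gcongr
        exact one_add_pow_sub_one_le (by positivity) hj

end TaylorPolynomial

theorem norm_exp_smul_le_sSup_image_Icc {𝔸 : Type*} [NormedRing 𝔸] [NormedAlgebra ℝ 𝔸]
    [CompleteSpace 𝔸] (x : 𝔸) {a b t : ℝ} (ht : t ∈ Set.Icc a b) :
    ‖exp (t • x)‖ ≤ sSup ((fun s : ℝ => ‖exp (s • x)‖) '' Set.Icc a b) :=
  (differentiable_exp_smul_const ℝ x).continuous.norm.continuousOn.le_sSup_image_Icc ht

theorem taylor_time_stepping_vector_bound_general (n : ℕ) (L : Matrix (Fin n) (Fin n) ℂ)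
    (T h : ℝ) (hT : 0 < T) (m k : ℕ)
    (hhm : h = T / m) (hLh : ‖L‖ * h ≤ 1)
    (hmk : (m : ℝ) * Real.exp 1 ^ 2 / (k + 1).factorial ≤ 1)
    (C : ℝ)
    (hC : C = sSup ((fun t : ℝ => ‖NormedSpace.exp (t • L)‖) '' Set.Icc 0 T))
    (y₀ : EuclideanSpace ℂ (Fin n)) :
    ∀ j : ℕ, 1 ≤ j → j ≤ m →
      ‖(EuclideanSpace.equiv (Fin n) ℂ).symm
          (((∑ i ∈ Finset.range (k + 1), ((i.factorial : ℂ)⁻¹) • (h • L) ^ i) ^ j -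
              NormedSpace.exp ((h * j : ℝ) • L)) *ᵥ y₀)‖ ≤
        (Real.exp 1 - 1) * Real.exp 1 ^ 2 * j / (k + 1).factorial * C * ‖y₀‖ := by
  intro j hj1 hjm
  have hh : 0 ≤ h := by rw [hhm]; positivity
  have hmh : m * h = T := by rw [hhm, mul_div_cancel₀ _ (Nat.cast_ne_zero.2 (by omega))]
  have hexp_pow (p : ℕ) : exp (h • L) ^ p = exp ((h * p : ℝ) • L) := by
    rw [← Matrix.exp_nsmul, ← Nat.cast_smul_eq_nsmul ℝ, smul_smul, mul_comm]
  have hpow_le (p : ℕ) (hp : p ≤ m) : ‖exp (h • L) ^ p‖ ≤ C := by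
    rw [hexp_pow, hC, ← hmh, mul_comm h]
    exact norm_exp_smul_le_sSup_image_Icc L ⟨by positivity, by gcongr⟩
  have hhL : ‖h • L‖ ≤ 1 := by rwa [norm_smul, Real.norm_of_nonneg hh, mul_comm]
  have he : 1 ≤ Real.exp 1 := Real.one_le_exp zero_le_one
  have hj : j * (Real.exp 1 / (k + 1)!) ≤ 1 := by
    refine le_trans ?_ hmk
    rw [← mul_div_assoc]
    gcongr
    exact le_self_pow₀ he two_ne_zero
  calc _ ≤ ‖(∑ i ∈ range (k + 1), ((i ! : ℂ)⁻¹) • (h • L) ^ i) ^ j - exp (h • L) ^ j‖ * ‖y₀‖ := by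
        rw [hexp_pow]
        exact l2_opNorm_mulVec _ _
    _ ≤ (Real.exp 1 - 1) * (j * (Real.exp 1 / (k + 1)!)) * C * ‖y₀‖ := by
        gcongr
        exact norm_sum_range_pow_sub_exp_pow_le hhL hj fun p hp => hpow_le p (hp.trans hjm)
    _ = (Real.exp 1 - 1) * Real.exp 1 * j / (k + 1)! * C * ‖y₀‖ := by ring
    _ ≤ _ := by
        have hC0 : 0 ≤ C := (norm_nonneg _).trans (hpow_le 0 m.zero_le)
        gcongr
        exact le_self_pow₀ he two_ne_zero

/-- error of the truncated-Taylor time stepping on a vector.  With `h = T/m`,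
`‖L‖h ≤ 1`, `m·e²/(k+1)! ≤ 1`, `V_k = ∑_{i=0}^{k}(Lh)^i/i!` and
`C = sup_{t ∈ [0,T]} ‖exp(Lt)‖`, for any `y₀` and any `1 ≤ j ≤ m`,
`‖V_k^j y₀ − exp(Lhj) y₀‖ ≤ ((e−1)e²j/(k+1)!)·C·‖y₀‖`. -/
theorem taylor_time_stepping_vector_bound (n : ℕ) (L : Matrix (Fin n) (Fin n) ℂ)
    (T h : ℝ) (hT : 0 < T) (m k : ℕ) (hm : 0 < m) (hk : 0 < k)
    (hhm : h = T / m) (hLh : ‖L‖ * h ≤ 1)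
    (hmk : (m : ℝ) * Real.exp 1 ^ 2 / (k + 1).factorial ≤ 1)
    (C : ℝ)
    (hC : C = sSup ((fun t : ℝ => ‖NormedSpace.exp (t • L)‖) '' Set.Icc 0 T))
    (y₀ : EuclideanSpace ℂ (Fin n)) :
    ∀ j : ℕ, 1 ≤ j → j ≤ m →
      ‖(EuclideanSpace.equiv (Fin n) ℂ).symm
          (((∑ i ∈ Finset.range (k + 1), ((i.factorial : ℂ)⁻¹) • (h • L) ^ i) ^ j -
              NormedSpace.exp ((h * j : ℝ) • L)) *ᵥ y₀)‖ ≤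
        (Real.exp 1 - 1) * Real.exp 1 ^ 2 * j / (k + 1).factorial * C * ‖y₀‖ :=
  taylor_time_stepping_vector_bound_general n L T h hT m k hhm hLh hmk C hC y₀
end

section
/- Let x : [0,∞) → ℂ^n be differentiable and satisfy dx_j/dt = (F₀)_j + ∑_l (F₁)_{jl} e^{i x_l}, where F₀ ∈ ℂ^n satisfies min_j Im((F₀)_j) = μ̃₀ ≥ 0 and F₁ ∈ ℂ^{n×n}. Fix p, q ∈ (1,∞) with 1/p + 1/q = 1. If at a time t the vector ψ(t) = (e^{i x_1(t)}, …, e^{i x_n(t)}) satisfies ‖F₁‖_{row,q} · ‖ψ(t)‖_p < μ̃₀, then d/dt (‖ψ(t)‖_p^p) ≤ 0. Consequently, if ‖F₁‖_{row,q}·‖ψ(0)‖_p < μ̃₀, then ‖ψ(t)‖_p ≤ ‖ψ(0)‖_p for all t ≥ 0. -/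
/-!
Since `‖e^{i x_j}‖^p = e^{-p Im x_j}`, the derivative of `∑_j ‖ψ_j‖^p` is
`-p ∑_j ‖ψ_j‖^p Im(dx_j/dt)`, and by Hölder
`Im(dx_j/dt) ≥ Im (F₀)_j - ‖F₁‖_{row,q} ‖ψ‖_p > 0` under the smallness condition, so the
derivative is negative. For the second claim, the smallness condition at `t = 0` persists
wherever `‖ψ(t)‖_p = ‖ψ(0)‖_p`, so `∑_j ‖ψ_j(t)‖^p` can never climb above its initial value.
-/

noncomputable def vecPNorm {ι : Type*} [Fintype ι] (p : ℝ) (x : ι → ℂ) : ℝ :=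
  (∑ i, ‖x i‖ ^ p) ^ (1 / p)

open Complex

lemma vecPNorm_nonneg {ι : Type*} [Fintype ι] (p : ℝ) (x : ι → ℂ) : 0 ≤ vecPNorm p x :=
  Real.rpow_nonneg (Finset.sum_nonneg fun _ _ => Real.rpow_nonneg (norm_nonneg _) p) _

lemma vecPNorm_le_vecPNorm {ι : Type*} [Fintype ι] {p : ℝ} (hp : 0 ≤ p) {x y : ι → ℂ}
    (h : ∑ i, ‖x i‖ ^ p ≤ ∑ i, ‖y i‖ ^ p) : vecPNorm p x ≤ vecPNorm p y :=
  Real.rpow_le_rpow (Finset.sum_nonneg fun _ _ => Real.rpow_nonneg (norm_nonneg _) p) h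
    (by positivity)

lemma norm_sum_mul_le_vecPNorm_mul {ι : Type*} [Fintype ι] {p q : ℝ} (hpq : p.HolderConjugate q)
    (a b : ι → ℂ) : ‖∑ l, a l * b l‖ ≤ vecPNorm q a * vecPNorm p b :=
  calc ‖∑ l, a l * b l‖ ≤ ∑ l, ‖a l‖ * ‖b l‖ := by
        simpa only [norm_mul] using norm_sum_le Finset.univ fun l => a l * b l
    _ ≤ vecPNorm q a * vecPNorm p b :=
        Real.inner_le_Lp_mul_Lq_of_nonneg Finset.univ hpq.symm (fun _ _ => norm_nonneg _)
          (fun _ _ => norm_nonneg _)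

lemma im_sub_vecPNorm_mul_le_im_add_sum_mul {ι : Type*} [Fintype ι] {p q : ℝ}
    (hpq : p.HolderConjugate q) (c : ℂ) (a b : ι → ℂ) :
    c.im - vecPNorm q a * vecPNorm p b ≤ (c + ∑ l, a l * b l).im := by
  rw [add_im]
  linarith [norm_sum_mul_le_vecPNorm_mul hpq a b, neg_abs_le (∑ l, a l * b l).im,
    abs_im_le_norm (∑ l, a l * b l)]

lemma norm_cexp_I_mul_rpow (z : ℂ) (p : ℝ) : ‖cexp (I * z)‖ ^ p = Real.exp (-p * z.im) := by
  rw [norm_exp, ← Real.exp_mul, mul_re, I_re, I_im]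
  congr 1
  ring

lemma HasDerivAt.norm_cexp_I_mul_rpow {z : ℝ → ℂ} {z' : ℂ} {t : ℝ} (hz : HasDerivAt z z' t)
    (p : ℝ) :
    HasDerivAt (fun s => ‖cexp (I * z s)‖ ^ p) (-p * ‖cexp (I * z t)‖ ^ p * z'.im) t := by
  have him : HasDerivAt (fun s => (z s).im) z'.im t := imCLM.hasFDerivAt.comp_hasDerivAt t hz
  simp only [_root_.norm_cexp_I_mul_rpow]
  convert (him.const_mul (-p)).exp using 1
  ring

/-- The left-hand side is `d/dt ∑_j ‖e^{i z_j}‖^p` along the flow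
`dz_j/dt = (F₀)_j + ∑_l (F₁)_{jl} e^{i z_l}`. -/
lemma sum_rpow_mul_im_flow_neg {ι : Type*} [Fintype ι] [Nonempty ι] {p q : ℝ}
    (hpq : p.HolderConjugate q) (F₀ : ι → ℂ) (F₁ : ι → ι → ℂ) {M μ₀ : ℝ}
    (hμ : ∀ j, μ₀ ≤ (F₀ j).im) (hrow : ∀ j, vecPNorm q (F₁ j) ≤ M) (z : ι → ℂ)
    (hsmall : M * vecPNorm p (fun j => cexp (I * z j)) < μ₀) :
    ∑ j, -p * ‖cexp (I * z j)‖ ^ p * (F₀ j + ∑ l, F₁ j l * cexp (I * z l)).im < 0 := by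
  refine Finset.sum_neg (fun j _ => ?_) Finset.univ_nonempty
  have hflow := im_sub_vecPNorm_mul_le_im_add_sum_mul hpq (F₀ j) (F₁ j) fun l => cexp (I * z l)
  have hM := mul_le_mul_of_nonneg_right (hrow j) (vecPNorm_nonneg p fun l => cexp (I * z l))
  have him : 0 < (F₀ j + ∑ l, F₁ j l * cexp (I * z l)).im := by linarith [hμ j]
  have hψ : 0 < ‖cexp (I * z j)‖ ^ p := Real.rpow_pos_of_pos (norm_pos_iff.2 (exp_ne_zero _)) p
  exact mul_neg_of_neg_of_pos (mul_neg_of_neg_of_pos (neg_lt_zero.2 hpq.pos) hψ) him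

lemma le_apply_zero_of_hasDerivAt_neg_of_eq {g g' : ℝ → ℝ} (hg : ∀ s, HasDerivAt g (g' s) s)
    (hneg : ∀ s, 0 ≤ s → g s = g 0 → g' s < 0) {t : ℝ} (ht : 0 ≤ t) : g t ≤ g 0 :=
  image_le_of_deriv_right_lt_deriv_boundary' (B := fun _ => g 0) (B' := 0)
    (fun s _ => (hg s).continuousAt.continuousWithinAt) (fun s _ => (hg s).hasDerivWithinAt)
    le_rfl continuousOn_const (fun _ _ => hasDerivWithinAt_const _ _ _)
    (fun s hs => hneg s hs.1) ⟨ht, le_rfl⟩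

theorem dissipativity_p_norm_general (n : ℕ) (hn : 0 < n)
    (p q : ℝ) (hp : 1 < p) (hpq : 1 / p + 1 / q = 1)
    (F₀ : Fin n → ℂ) (F₁ : Matrix (Fin n) (Fin n) ℂ)
    (μ₀ : ℝ) (hμ : ∀ j, μ₀ ≤ (F₀ j).im)
    (x : ℝ → Fin n → ℂ)
    (hx : ∀ (j : Fin n) (t : ℝ),
      HasDerivAt (fun s => x s j)
        (F₀ j + ∑ l, F₁ j l * Complex.exp (Complex.I * x t l)) t) :
    (∀ t : ℝ, 0 ≤ t →
      (⨆ j : Fin n, vecPNorm q (fun l => F₁ j l)) *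
          vecPNorm p (fun j => Complex.exp (Complex.I * x t j)) < μ₀ →
      ∀ D : ℝ,
        HasDerivAt (fun s => ∑ j, ‖Complex.exp (Complex.I * x s j)‖ ^ p) D t →
        D ≤ 0) ∧
    ((⨆ j : Fin n, vecPNorm q (fun l => F₁ j l)) *
        vecPNorm p (fun j => Complex.exp (Complex.I * x 0 j)) < μ₀ →
      ∀ t : ℝ, 0 ≤ t →
        vecPNorm p (fun j => Complex.exp (Complex.I * x t j)) ≤
          vecPNorm p (fun j => Complex.exp (Complex.I * x 0 j))) := by
  have : Nonempty (Fin n) := ⟨⟨0, hn⟩⟩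
  have hconj : p.HolderConjugate q :=
    Real.holderConjugate_iff.2 ⟨hp, by simpa only [one_div] using hpq⟩
  have hrow : ∀ j, vecPNorm q (F₁ j) ≤ ⨆ j : Fin n, vecPNorm q (fun l => F₁ j l) :=
    le_ciSup (Set.finite_range _).bddAbove
  have hderiv := fun t => HasDerivAt.fun_sum fun j (_ : j ∈ Finset.univ) =>
    (hx j t).norm_cexp_I_mul_rpow p
  have hneg := fun t => sum_rpow_mul_im_flow_neg hconj F₀ F₁ hμ hrow (x t)
  refine ⟨fun t _ hsmall D hD => ((hD.unique (hderiv t)).trans_lt (hneg t hsmall)).le,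
    fun hsmall t ht => vecPNorm_le_vecPNorm hconj.nonneg ?_⟩
  refine le_apply_zero_of_hasDerivAt_neg_of_eq hderiv (fun s _ hs => hneg s ?_) ht
  rwa [vecPNorm, hs]

/-- dissipativity in the `p`-norm: for a solution of
`dx_j/dt = (F₀)_j + ∑_l (F₁)_{jl} e^{i x_l}` with `min_j Im (F₀)_j ≥ μ̃₀ ≥ 0`, if
`‖F₁‖_{row,q}·‖ψ(t)‖_p < μ̃₀` where `ψ(t) = (e^{i x_1(t)},…,e^{i x_n(t)})`, then
`d/dt ‖ψ(t)‖_p^p ≤ 0`; consequently if this holds at `t = 0` then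
`‖ψ(t)‖_p ≤ ‖ψ(0)‖_p` for all `t ≥ 0`. -/
theorem dissipativity_p_norm (n : ℕ) (hn : 0 < n)
    (p q : ℝ) (hp : 1 < p) (hq : 1 < q) (hpq : 1 / p + 1 / q = 1)
    (F₀ : Fin n → ℂ) (F₁ : Matrix (Fin n) (Fin n) ℂ)
    (μ₀ : ℝ) (hμ0 : 0 ≤ μ₀) (hμ : ∀ j, μ₀ ≤ (F₀ j).im)
    (x : ℝ → Fin n → ℂ)
    (hx : ∀ (j : Fin n) (t : ℝ),
      HasDerivAt (fun s => x s j)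
        (F₀ j + ∑ l, F₁ j l * Complex.exp (Complex.I * x t l)) t) :
    (∀ t : ℝ, 0 ≤ t →
      (⨆ j : Fin n, vecPNorm q (fun l => F₁ j l)) *
          vecPNorm p (fun j => Complex.exp (Complex.I * x t j)) < μ₀ →
      ∀ D : ℝ,
        HasDerivAt (fun s => ∑ j, ‖Complex.exp (Complex.I * x s j)‖ ^ p) D t →
        D ≤ 0) ∧
    ((⨆ j : Fin n, vecPNorm q (fun l => F₁ j l)) *
        vecPNorm p (fun j => Complex.exp (Complex.I * x 0 j)) < μ₀ →
      ∀ t : ℝ, 0 ≤ t →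
        vecPNorm p (fun j => Complex.exp (Complex.I * x t j)) ≤
          vecPNorm p (fun j => Complex.exp (Complex.I * x 0 j))) :=
  dissipativity_p_norm_general n hn p q hp hpq F₀ F₁ μ₀ hμ x hx
end

section
/- Let m, k be positive integers with m·e²/(k+1)! ≤ 1, L an n×n complex matrix with ‖L‖h ≤ 1, C = sup_{t∈[0,T]}‖exp(Lt)‖ where T = mh, and V_k = ∑_{i=0}^{k}(Lh)^i/i!. Then for all 1 ≤ j ≤ m, ‖V_k^j‖ ≤ C·(1 + (e−1)·j·e²/(k+1)!) ≤ 2·C·e. -/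
/-!
Put `A = h L` and `V = V_k(A)`. As `V` commutes with `A`,
`V ^ j = exp A ^ j * (V exp (-A)) ^ j`, and `exp A ^ j = exp (j h L)` has norm at most `C`.
The Taylor remainder gives `‖V exp (-A) - 1‖ ≤ ‖V - exp A‖ ‖exp (-A)‖ ≤ e² / (k+1)! =: δ`, hence
`‖(V exp (-A)) ^ j‖ ≤ (1 + δ) ^ j ≤ exp (j δ) ≤ 1 + (e - 1) j δ`, the last step by convexity of
`exp` on `[0, 1]`, since `j δ ≤ m δ ≤ 1`.
-/

open NormedSpace Finset Nat
open scoped Matrix.Norms.L2Operator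

lemma Real.exp_le_one_add_exp_one_sub_one_mul {x : ℝ} (hx₀ : 0 ≤ x) (hx₁ : x ≤ 1) :
    Real.exp x ≤ 1 + (Real.exp 1 - 1) * x := by
  have := convexOn_exp.2 (Set.mem_univ 0) (Set.mem_univ 1) (sub_nonneg.2 hx₁) hx₀
    (sub_add_cancel 1 x)
  simp only [smul_eq_mul, mul_zero, mul_one, zero_add, Real.exp_zero] at this
  linarith

lemma one_add_pow_le_one_add_exp_one_sub_one_mul {δ : ℝ} (hδ : 0 ≤ δ) {j : ℕ}
    (hj : j * δ ≤ 1) : (1 + δ) ^ j ≤ 1 + (Real.exp 1 - 1) * (j * δ) :=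
  calc (1 + δ) ^ j ≤ Real.exp δ ^ j := by
        gcongr
        linarith [Real.add_one_le_exp δ]
    _ = Real.exp (j * δ) := (Real.exp_nat_mul δ j).symm
    _ ≤ 1 + (Real.exp 1 - 1) * (j * δ) :=
        Real.exp_le_one_add_exp_one_sub_one_mul (by positivity) hj

lemma norm_inv_factorial_smul_pow_le {𝕂 𝔸 : Type*} [RCLike 𝕂] [NormedRing 𝔸]
    [NormedAlgebra 𝕂 𝔸] (x : 𝔸) {i : ℕ} (hi : 0 < i) :
    ‖((i ! : 𝕂)⁻¹) • x ^ i‖ ≤ ‖x‖ ^ i / i ! := by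
  rw [norm_smul, norm_inv, RCLike.norm_natCast, inv_mul_eq_div]
  gcongr
  exact norm_pow_le' x hi

lemma norm_pow_le_one_add_pow {𝔸 : Type*} [NormedRing 𝔸] (h₁ : ‖(1 : 𝔸)‖ ≤ 1) {w : 𝔸}
    {δ : ℝ} (hw : ‖w - 1‖ ≤ δ) {j : ℕ} (hj : 0 < j) : ‖w ^ j‖ ≤ (1 + δ) ^ j :=
  (norm_pow_le' w hj).trans <| by
    gcongr
    linarith [norm_le_norm_add_norm_sub' w 1]

section RealBanachAlgebra

variable {𝔸 : Type*} [NormedRing 𝔸] [NormedAlgebra ℝ 𝔸] [CompleteSpace 𝔸]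

lemma exp_mul_exp_neg (x : 𝔸) : exp x * exp (-x) = 1 := by
  let := NormedAlgebra.restrictScalars ℚ ℝ 𝔸
  rw [← exp_add_of_commute (Commute.refl x).neg_right, add_neg_cancel, exp_zero]

lemma pow_eq_exp_pow_mul_pow_mul_exp_neg {v x : 𝔸} (hvx : Commute v x) (j : ℕ) :
    v ^ j = exp x ^ j * (v * exp (-x)) ^ j := by
  rw [hvx.neg_right.exp_right.mul_pow, ← mul_assoc, ((hvx.symm.exp_left).pow_pow j j).eq,
    mul_assoc, ← (Commute.refl x).neg_right.exp.mul_pow, exp_mul_exp_neg, one_pow, mul_one]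

lemma norm_exp_le_exp_norm (h₁ : ‖(1 : 𝔸)‖ ≤ 1) (x : 𝔸) : ‖exp x‖ ≤ Real.exp ‖x‖ := by
  refine (exp_series_hasSum_exp' (𝕂 := ℝ) x).norm_le_of_bounded
    (Real.exp_eq_exp_ℝ ▸ expSeries_div_hasSum_exp ‖x‖) fun i => ?_
  rcases i.eq_zero_or_pos with rfl | hi
  · simpa using h₁
  · exact norm_inv_factorial_smul_pow_le x hi

lemma continuous_exp_smul (a : 𝔸) : Continuous fun t : ℝ => exp (t • a) := by
  let := NormedAlgebra.restrictScalars ℚ ℝ 𝔸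
  fun_prop

end RealBanachAlgebra

section Taylor

variable {𝕂 𝔸 : Type*} [RCLike 𝕂] [NormedRing 𝔸] [NormedAlgebra 𝕂 𝔸]

variable (𝕂) in
/-- The paper's `V_k`, as a function of `x = L h`. -/
noncomputable def expTaylor (k : ℕ) (x : 𝔸) : 𝔸 :=
  ∑ i ∈ range (k + 1), ((i ! : 𝕂)⁻¹) • x ^ i

lemma commute_expTaylor (k : ℕ) (x : 𝔸) : Commute (expTaylor 𝕂 k x) x :=
  Commute.sum_left _ _ _ fun i _ => ((Commute.refl x).pow_left i).smul_left _

variable [CompleteSpace 𝔸]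

/-- The tail is bounded termwise by `‖x‖^(k+1)/(k+1)! · ‖x‖^i/i!`, as `(k+1)! i! ≤ (i+k+1)!`. -/
lemma norm_exp_sub_expTaylor_le (k : ℕ) (x : 𝔸) :
    ‖exp x - expTaylor 𝕂 k x‖ ≤ ‖x‖ ^ (k + 1) * Real.exp ‖x‖ / (k + 1)! := by
  have htail := (hasSum_nat_add_iff' (k + 1)).2 (exp_series_hasSum_exp' (𝕂 := 𝕂) x)
  have hexp := (Real.exp_eq_exp_ℝ ▸ expSeries_div_hasSum_exp ‖x‖).mul_left
    (‖x‖ ^ (k + 1) / (k + 1)!)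
  rw [mul_div_right_comm]
  refine htail.norm_le_of_bounded hexp fun i => ?_
  refine (norm_inv_factorial_smul_pow_le x (by omega)).trans ?_
  have hfac : ((k + 1)! * i ! : ℝ) ≤ (i + (k + 1))! := by
    rw [mul_comm]
    exact_mod_cast Nat.le_of_dvd (Nat.factorial_pos _)
      (Nat.factorial_mul_factorial_dvd_factorial_add i (k + 1))
  calc ‖x‖ ^ (i + (k + 1)) / (i + (k + 1))! ≤ ‖x‖ ^ (i + (k + 1)) / ((k + 1)! * i !) := by
        gcongr
    _ = ‖x‖ ^ (k + 1) / (k + 1)! * (‖x‖ ^ i / i !) := by rw [pow_add]; ring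

lemma norm_expTaylor_mul_exp_neg_sub_one_le (h₁ : ‖(1 : 𝔸)‖ ≤ 1) {x : 𝔸} (hx : ‖x‖ ≤ 1)
    (k : ℕ) : ‖expTaylor 𝕂 k x * exp (-x) - 1‖ ≤ Real.exp 1 ^ 2 / (k + 1)! := by
  let := NormedAlgebra.restrictScalars ℝ 𝕂 𝔸
  have hrem : ‖expTaylor 𝕂 k x - exp x‖ ≤ Real.exp 1 / (k + 1)! := by
    rw [norm_sub_rev]
    refine (norm_exp_sub_expTaylor_le k x).trans ?_
    gcongr
    calc ‖x‖ ^ (k + 1) * Real.exp ‖x‖ ≤ 1 * Real.exp 1 := by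
          gcongr
          exact pow_le_one₀ (norm_nonneg x) hx
      _ = Real.exp 1 := one_mul _
  have hneg : ‖exp (-x)‖ ≤ Real.exp 1 :=
    (norm_exp_le_exp_norm h₁ (-x)).trans (Real.exp_le_exp.2 ((norm_neg x).trans_le hx))
  calc ‖expTaylor 𝕂 k x * exp (-x) - 1‖ = ‖(expTaylor 𝕂 k x - exp x) * exp (-x)‖ := by
        rw [sub_mul, exp_mul_exp_neg]
    _ ≤ Real.exp 1 / (k + 1)! * Real.exp 1 :=
        (norm_mul_le _ _).trans (mul_le_mul hrem hneg (norm_nonneg _) (by positivity))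
    _ = Real.exp 1 ^ 2 / (k + 1)! := by ring

lemma norm_expTaylor_pow_le (h₁ : ‖(1 : 𝔸)‖ ≤ 1) {x : 𝔸} (hx : ‖x‖ ≤ 1) (k : ℕ) {j : ℕ}
    (hj : 0 < j) (hjk : j * (Real.exp 1 ^ 2 / (k + 1)!) ≤ 1) :
    ‖expTaylor 𝕂 k x ^ j‖ ≤
      ‖exp x ^ j‖ * (1 + (Real.exp 1 - 1) * (j * (Real.exp 1 ^ 2 / (k + 1)!))) := by
  let := NormedAlgebra.restrictScalars ℝ 𝕂 𝔸
  rw [pow_eq_exp_pow_mul_pow_mul_exp_neg (commute_expTaylor k x)]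
  refine (norm_mul_le _ _).trans (mul_le_mul_of_nonneg_left ?_ (norm_nonneg _))
  exact (norm_pow_le_one_add_pow h₁ (norm_expTaylor_mul_exp_neg_sub_one_le h₁ hx k) hj).trans
    (one_add_pow_le_one_add_exp_one_sub_one_mul (by positivity) hjk)

end Taylor

lemma Matrix.l2_opNorm_one_le (n : Type*) [Fintype n] [DecidableEq n] :
    ‖(1 : Matrix n n ℂ)‖ ≤ 1 := by
  rw [Matrix.cstar_norm_def, map_one]
  exact ContinuousLinearMap.norm_id_le

theorem norm_taylor_pow_le_general (n : ℕ) (L : Matrix (Fin n) (Fin n) ℂ)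
    (h T : ℝ) (hh : 0 < h) (m k : ℕ)
    (hT : T = m * h) (hLh : ‖L‖ * h ≤ 1)
    (hmk : (m : ℝ) * Real.exp 1 ^ 2 / (k + 1).factorial ≤ 1)
    (C : ℝ)
    (hC : C = sSup ((fun t : ℝ => ‖NormedSpace.exp (t • L)‖) '' Set.Icc 0 T)) :
    ∀ j : ℕ, 1 ≤ j → j ≤ m →
      ‖(∑ i ∈ Finset.range (k + 1), ((i.factorial : ℂ)⁻¹) • (h • L) ^ i) ^ j‖ ≤
          C * (1 + (Real.exp 1 - 1) * j * Real.exp 1 ^ 2 / (k + 1).factorial) ∧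
        C * (1 + (Real.exp 1 - 1) * j * Real.exp 1 ^ 2 / (k + 1).factorial) ≤
          2 * C * Real.exp 1 := by
  intro j hj hjm
  have hjm' : (j : ℝ) ≤ m := by exact_mod_cast hjm
  have hhL : ‖h • L‖ ≤ 1 := by rw [norm_smul, Real.norm_of_nonneg hh.le, mul_comm]; exact hLh
  have hjk : j * (Real.exp 1 ^ 2 / (k + 1)!) ≤ 1 := by
    rw [← mul_div_assoc]; exact (by gcongr : _ ≤ _).trans hmk
  have hexp : ‖exp (h • L) ^ j‖ ≤ C := by
    rw [← Matrix.exp_nsmul, ← Nat.cast_smul_eq_nsmul ℝ, smul_smul, hC]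
    refine le_csSup (isCompact_Icc.bddAbove_image (continuous_exp_smul L).norm.continuousOn)
      ⟨j * h, ⟨by positivity, hT ▸ by gcongr⟩, rfl⟩
  have he : 0 ≤ Real.exp 1 - 1 := sub_nonneg.2 (Real.one_le_exp zero_le_one)
  have hcorr : (Real.exp 1 - 1) * (j * (Real.exp 1 ^ 2 / (k + 1)!)) ≤ Real.exp 1 - 1 :=
    mul_le_of_le_one_right he hjk
  have hC₀ : 0 ≤ C := (norm_nonneg _).trans hexp
  have key := norm_expTaylor_pow_le (𝕂 := ℂ) (Matrix.l2_opNorm_one_le _) hhL k hj hjk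
  constructor
  · calc ‖expTaylor ℂ k (h • L) ^ j‖ ≤ _ := key
      _ ≤ C * (1 + (Real.exp 1 - 1) * (j * (Real.exp 1 ^ 2 / (k + 1)!))) :=
          mul_le_mul_of_nonneg_right hexp (add_nonneg zero_le_one (mul_nonneg he (by positivity)))
      _ = _ := by ring
  · calc _ = C * (1 + (Real.exp 1 - 1) * (j * (Real.exp 1 ^ 2 / (k + 1)!))) := by ring
      _ ≤ C * (2 * Real.exp 1) := by gcongr; linarith
      _ = _ := by ring

/-- with `m·e²/(k+1)! ≤ 1`, `‖L‖h ≤ 1`, `T = m h` and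
`C = sup_{t∈[0,T]}‖exp(Lt)‖`, the Taylor truncation `V_k = ∑_{i=0}^{k}(Lh)^i/i!`
satisfies `‖V_k^j‖ ≤ C(1 + (e−1)·j·e²/(k+1)!) ≤ 2Ce` for all `1 ≤ j ≤ m`. -/
theorem norm_taylor_pow_le (n : ℕ) (L : Matrix (Fin n) (Fin n) ℂ)
    (h T : ℝ) (hh : 0 < h) (m k : ℕ) (hm : 0 < m) (hk : 0 < k)
    (hT : T = m * h) (hLh : ‖L‖ * h ≤ 1)
    (hmk : (m : ℝ) * Real.exp 1 ^ 2 / (k + 1).factorial ≤ 1)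
    (C : ℝ)
    (hC : C = sSup ((fun t : ℝ => ‖NormedSpace.exp (t • L)‖) '' Set.Icc 0 T)) :
    ∀ j : ℕ, 1 ≤ j → j ≤ m →
      ‖(∑ i ∈ Finset.range (k + 1), ((i.factorial : ℂ)⁻¹) • (h • L) ^ i) ^ j‖ ≤
          C * (1 + (Real.exp 1 - 1) * j * Real.exp 1 ^ 2 / (k + 1).factorial) ∧
        C * (1 + (Real.exp 1 - 1) * j * Real.exp 1 ^ 2 / (k + 1).factorial) ≤
          2 * C * Real.exp 1 :=
  norm_taylor_pow_le_general n L h T hh m k hT hLh hmk C hC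
end
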